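/- arXiv:2204.09645 — 2 statements merged into one kernel-verified Lean document; each statement's English description precedes it below -/
import Mathlib

section
/- Let X be a continuum and let A, B be nonempty closed subsets of X with A ∩ B = ∅. If B is connected, then there exists a sequence (K_n) of subcontinua of X such that the union of all subcontinua of X meeting B and contained in X \ A equals the union of the K_n. -/
open Set Metric Filter Topology TopologicalSpace

/-- A subcontinuum: a nonempty compact connected subset. -/
def IsSubcontinuum {X : Type*} [TopologicalSpace X] (K : Set X) : Prop :=
  IsCompact K ∧ IsConnected K

/-- `kappa A B` : the union of all subcontinua meeting `B` and avoiding `A`. -/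
def kappa {X : Type*} [TopologicalSpace X] (A B : Set X) : Set X :=
  ⋃₀ {L | IsSubcontinuum L ∧ (L ∩ B).Nonempty ∧ L ⊆ Aᶜ}

/-- A continuum is decomposable if it is the union of two proper subcontinua. -/
def Decomposable (X : Type*) [TopologicalSpace X] : Prop :=
  ∃ M N : Set X, IsSubcontinuum M ∧ IsSubcontinuum N ∧
    M ≠ univ ∧ N ≠ univ ∧ M ∪ N = univ

/-- The property of Kelley. -/
def KelleyProp (X : Type*) [MetricSpace X] : Prop :=
  ∀ (x : ℕ → X) (x₀ : X), Tendsto x atTop (𝓝 x₀) →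
    ∀ A : Set X, IsSubcontinuum A → x₀ ∈ A →
      ∃ B : ℕ → Set X, (∀ n, IsSubcontinuum (B n) ∧ x n ∈ B n) ∧
        Tendsto (fun n => hausdorffDist (B n) A) atTop (𝓝 0)

/-- The hyperspace of nonblockers of `F₁(X)`, as a subset of the hyperspace of
nonempty compact subsets of `X` with the Hausdorff metric. -/
def NB (X : Type*) [MetricSpace X] : Set (NonemptyCompacts X) :=
  {A | ∀ x ∉ (A : Set X), Dense (kappa (A : Set X) ({x} : Set X))}

/-- The minimal nonblocker containing `x` (equal to `X` if `x` lies in no nonblocker). -/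
def piSet (X : Type*) [MetricSpace X] (x : X) : Set X :=
  ⋂ A ∈ {A ∈ NB X | x ∈ (A : Set X)}, (A : Set X)

/-!
Exhaust `X \ A` by the closed sets `Cₙ = B ∪ (X \ thickening (1/(n+1)) A)` and let `Kₙ` be the
component of `Cₙ` containing a fixed point `b ∈ B`. A component of a closed set is closed, so
each `Kₙ` is a continuum avoiding `A` and meeting `B`. Conversely, if `L` is a continuum meeting
`B` and avoiding `A`, then `L ∪ B` is a continuum disjoint from the closed set `A`, hence at
positive distance from it, so `L ∪ B` lies in some `Cₙ` and therefore in `Kₙ`.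
-/

theorem IsClosed.connectedComponentIn {X : Type*} [TopologicalSpace X] {F : Set X}
    (hF : IsClosed F) (x : X) : IsClosed (connectedComponentIn F x) := by
  by_cases hx : x ∈ F
  · exact closure_subset_iff_isClosed.1 <|
      isPreconnected_connectedComponentIn.closure.subset_connectedComponentIn
        (subset_closure (mem_connectedComponentIn hx))
        (closure_minimal (connectedComponentIn_subset F x) hF)
  · rw [connectedComponentIn_eq_empty hx]
    exact isClosed_empty

theorem isSubcontinuum_connectedComponentIn {X : Type*} [TopologicalSpace X] [CompactSpace X]
    {F : Set X} {x : X} (hF : IsClosed F) (hx : x ∈ F) :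
    IsSubcontinuum (connectedComponentIn F x) :=
  ⟨(hF.connectedComponentIn x).isCompact, isConnected_connectedComponentIn_iff.2 hx⟩

theorem IsSubcontinuum.union {X : Type*} [TopologicalSpace X] {L M : Set X}
    (hL : IsSubcontinuum L) (hM : IsSubcontinuum M) (hLM : (L ∩ M).Nonempty) :
    IsSubcontinuum (L ∪ M) :=
  ⟨hL.1.union hM.1, IsConnected.union hLM hL.2 hM.2⟩

theorem IsCompact.exists_nat_disjoint_thickening {X : Type*} [PseudoEMetricSpace X]
    {M A : Set X} (hM : IsCompact M) (hA : IsClosed A) (hMA : Disjoint M A) :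
    ∃ n : ℕ, Disjoint M (thickening (1 / (n + 1)) A) := by
  obtain ⟨δ, hδ, hdisj⟩ := hMA.exists_thickenings hM hA
  obtain ⟨n, hn⟩ := exists_nat_one_div_lt hδ
  exact ⟨n, hdisj.mono (self_subset_thickening hδ M) (thickening_mono hn.le A)⟩

theorem stmt_0_general {X : Type*} [MetricSpace X] [CompactSpace X]
    (A B : Set X) (hA : IsClosed A) (hB : IsClosed B) (hBne : B.Nonempty)
    (hAB : A ∩ B = ∅) (hBconn : IsConnected B) :
    ∃ K : ℕ → Set X, (∀ n, IsSubcontinuum (K n)) ∧ kappa A B = ⋃ n, K n := by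
  obtain ⟨b, hb⟩ := hBne
  have hBA : Disjoint B A := (disjoint_iff_inter_eq_empty.2 hAB).symm
  set C : ℕ → Set X := fun n => B ∪ (thickening (1 / (n + 1)) A)ᶜ
  have hC : ∀ n, IsClosed (C n) := fun n => hB.union isOpen_thickening.isClosed_compl
  have hCA : ∀ n, C n ⊆ Aᶜ := fun n => union_subset (subset_compl_iff_disjoint_right.2 hBA)
    (compl_subset_compl.2 (self_subset_thickening (by positivity) A))
  have hK : ∀ n, IsSubcontinuum (connectedComponentIn (C n) b) := fun n =>
    isSubcontinuum_connectedComponentIn (hC n) (Or.inl hb)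
  refine ⟨fun n => connectedComponentIn (C n) b, hK, Subset.antisymm ?_ (iUnion_subset fun n => ?_)⟩
  · rintro x ⟨L, ⟨hL, hLB, hLA⟩, hxL⟩
    have hM : IsSubcontinuum (L ∪ B) := hL.union ⟨hB.isCompact, hBconn⟩ hLB
    obtain ⟨n, hn⟩ := hM.1.exists_nat_disjoint_thickening hA
      ((subset_compl_iff_disjoint_right.1 hLA).union_left hBA)
    have hMC : L ∪ B ⊆ C n := fun z hz => Or.inr fun hzA => hn.ne_of_mem hz hzA rfl
    exact mem_iUnion.2 ⟨n, hM.2.isPreconnected.subset_connectedComponentIn (Or.inr hb) hMC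
      (Or.inl hxL)⟩
  · exact subset_sUnion_of_mem ⟨hK n, ⟨b, mem_connectedComponentIn (Or.inl hb), hb⟩,
      (connectedComponentIn_subset _ _).trans (hCA n)⟩

theorem stmt_0 {X : Type*} [MetricSpace X] [CompactSpace X] [ConnectedSpace X] [Nonempty X]
    (A B : Set X) (hA : IsClosed A) (hAne : A.Nonempty) (hB : IsClosed B) (hBne : B.Nonempty)
    (hAB : A ∩ B = ∅) (hBconn : IsConnected B) :
    ∃ K : ℕ → Set X, (∀ n, IsSubcontinuum (K n)) ∧ kappa A B = ⋃ n, K n :=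
  stmt_0_general A B hA hB hBne hAB hBconn
end

section
/- Let X be a continuum with the property of Kelley, let A be a nonempty closed subset of X, and let K be a subcontinuum of X \ A with nonempty interior. Then there exists a subcontinuum L of X with K ⊆ Int(L) ⊆ L ⊆ X \ A. -/
/-!
The property of Kelley, together with compactness of `K`, makes it uniform: there is `δ > 0`
such that every point `δ`-close to `K` lies in a subcontinuum Hausdorff-`ε`-close to `K`.
Taking `ε` smaller than the radius of a ball inside `K`, each of these subcontinua meets `K`, so
their union with `K` is connected. It contains the `δ`-thickening of `K` and lies in the
`ε`-thickening of `K`; its closure is the required `L` once the closed `ε`-thickening avoids `A`.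
-/

open Set Metric Filter Topology TopologicalSpace

namespace Metric

variable {X : Type*} [PseudoMetricSpace X] {B K : Set X}

theorem subset_thickening_of_hausdorffDist_lt {r : ℝ} (hB : B.Nonempty) (hK : K.Nonempty)
    (hBb : Bornology.IsBounded B) (hKb : Bornology.IsBounded K) (h : hausdorffDist B K < r) :
    B ⊆ thickening r K := fun _ hz =>
  mem_thickening_iff.2 <| exists_dist_lt_of_hausdorffDist_lt hz h <|
    hausdorffEDist_ne_top_of_nonempty_of_bounded hB hK hBb hKb

theorem inter_nonempty_of_hausdorffDist_lt_of_ball_subset {p : X} {r : ℝ} (hB : B.Nonempty)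
    (hBb : Bornology.IsBounded B) (hKb : Bornology.IsBounded K) (hball : ball p r ⊆ K)
    (h : hausdorffDist B K < r) : (B ∩ K).Nonempty := by
  have hp : p ∈ K := hball (mem_ball_self (hausdorffDist_nonneg.trans_lt h))
  rw [hausdorffDist_comm] at h
  obtain ⟨b, hb, hpb⟩ := exists_dist_lt_of_hausdorffDist_lt hp h <|
    hausdorffEDist_ne_top_of_nonempty_of_bounded ⟨p, hp⟩ hB hKb hBb
  exact ⟨b, hb, hball (mem_ball'.2 hpb)⟩

end Metric

theorem IsCompact.exists_tendsto_subseq_of_infDist_tendsto_zero {X : Type*} [PseudoMetricSpace X]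
    {K : Set X} (hK : IsCompact K) (hKne : K.Nonempty) {y : ℕ → X}
    (hy : Tendsto (fun n => infDist (y n) K) atTop (𝓝 0)) :
    ∃ x ∈ K, ∃ φ : ℕ → ℕ, StrictMono φ ∧ Tendsto (y ∘ φ) atTop (𝓝 x) := by
  choose k hkK hk using fun n => hK.exists_infDist_eq_dist hKne (y n)
  obtain ⟨x, hxK, φ, hφ, hkx⟩ := hK.tendsto_subseq hkK
  refine ⟨x, hxK, φ, hφ, tendsto_of_tendsto_of_dist hkx ?_⟩
  simp_rw [Function.comp_apply, dist_comm (k _), ← hk]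
  exact hy.comp hφ.tendsto_atTop

namespace KelleyProp

variable {X : Type*} [MetricSpace X] {K : Set X}

theorem exists_subcontinuum_hausdorffDist_lt (hkel : KelleyProp X) (hK : IsSubcontinuum K)
    {ε : ℝ} (hε : 0 < ε) :
    ∃ δ > 0, ∀ y, infDist y K < δ →
      ∃ B, IsSubcontinuum B ∧ y ∈ B ∧ hausdorffDist B K < ε := by
  by_contra! hcon
  choose y hyK hyB using fun n : ℕ => hcon (1 / (n + 1)) Nat.one_div_pos_of_nat
  have hy : Tendsto (fun n => infDist (y n) K) atTop (𝓝 0) :=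
    squeeze_zero (fun _ => infDist_nonneg) (fun n => (hyK n).le)
      tendsto_one_div_add_atTop_nhds_zero_nat
  obtain ⟨x, hxK, φ, -, hyx⟩ :=
    hK.1.exists_tendsto_subseq_of_infDist_tendsto_zero hK.2.nonempty hy
  obtain ⟨B, hB, hBK⟩ := hkel (y ∘ φ) x hyx K hK hxK
  obtain ⟨n, hn⟩ := (hBK.eventually_lt_const hε).exists
  exact (hyB (φ n) (B n) (hB n).1 (hB n).2).not_gt hn

theorem exists_isPreconnected_subset_interior_thickening (hkel : KelleyProp X)
    (hK : IsSubcontinuum K) (hint : (interior K).Nonempty) {ε : ℝ} (hε : 0 < ε) :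
    ∃ S, IsPreconnected S ∧ K ⊆ interior S ∧ S ⊆ thickening ε K := by
  obtain ⟨p, hp⟩ := hint
  obtain ⟨r, hr, hball⟩ := Metric.isOpen_iff.1 isOpen_interior p hp
  obtain ⟨δ, hδ, hδB⟩ := hkel.exists_subcontinuum_hausdorffDist_lt hK (lt_min hε hr)
  choose B hB hyB hBK using fun y : thickening δ K =>
    hδB y ((mem_thickening_iff_infDist_lt hK.2.nonempty).1 y.2)
  have hBmeet (y) : (B y ∩ K).Nonempty :=
    inter_nonempty_of_hausdorffDist_lt_of_ball_subset (hB y).2.nonempty (hB y).1.isBounded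
      hK.1.isBounded (hball.trans interior_subset) ((hBK y).trans_le (min_le_right _ _))
  refine ⟨⋃ y, K ∪ B y, ?_, ?_, ?_⟩
  · refine isPreconnected_iUnion ⟨p, mem_iInter.2 fun _ => Or.inl (interior_subset hp)⟩
      fun y => hK.2.isPreconnected.union' (inter_comm K _ ▸ hBmeet y) (hB y).2.isPreconnected
  · refine (self_subset_thickening hδ K).trans <| interior_maximal ?_ isOpen_thickening
    exact fun y hy => mem_iUnion.2 ⟨⟨y, hy⟩, Or.inr (hyB ⟨y, hy⟩)⟩
  · refine iUnion_subset fun y => union_subset (self_subset_thickening hε K) ?_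
    exact subset_thickening_of_hausdorffDist_lt (hB y).2.nonempty hK.2.nonempty
      (hB y).1.isBounded hK.1.isBounded ((hBK y).trans_le (min_le_left _ _))

end KelleyProp

theorem stmt_18_general {X : Type*} [MetricSpace X] [CompactSpace X]
    (hkel : KelleyProp X) (A : Set X) (hA : IsClosed A)
    (K : Set X) (hK : IsSubcontinuum K) (hKA : K ⊆ Aᶜ) (hint : (interior K).Nonempty) :
    ∃ L : Set X, IsSubcontinuum L ∧ K ⊆ interior L ∧ L ⊆ Aᶜ := by
  obtain ⟨ε, hε, hεA⟩ := hK.1.exists_cthickening_subset_open hA.isOpen_compl hKA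
  obtain ⟨S, hS, hKS, hSε⟩ := hkel.exists_isPreconnected_subset_interior_thickening hK hint hε
  have hSne : S.Nonempty := hK.2.nonempty.mono (hKS.trans interior_subset)
  refine ⟨closure S, ⟨isClosed_closure.isCompact, hSne.closure, hS.closure⟩,
    hKS.trans (interior_mono subset_closure), ?_⟩
  exact (closure_mono hSε).trans <| (closure_thickening_subset_cthickening ε K).trans hεA

theorem stmt_18 {X : Type*} [MetricSpace X] [CompactSpace X] [ConnectedSpace X] [Nonempty X]
    (hkel : KelleyProp X) (A : Set X) (hA : IsClosed A) (hAne : A.Nonempty)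
    (K : Set X) (hK : IsSubcontinuum K) (hKA : K ⊆ Aᶜ) (hint : (interior K).Nonempty) :
    ∃ L : Set X, IsSubcontinuum L ∧ K ⊆ interior L ∧ L ⊆ Aᶜ :=
  stmt_18_general hkel A hA K hK hKA hint
end
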